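/- RM satisfies the added blocker postulate under equiprobable divisions: let W be a simple voting game on [n], let G^Y be the game on [n]∪{0} with winning coalitions W^Y = { S∪{0} : S∈W }, and let G^N be the game on [n]∪{0} with winning coalitions W^N = { S∪{0} : S⊆[n] } ∪ W. With RM⁺ and RM⁻ computed with weight 2^{−n} on divisions of [n] for W and weight 2^{−(n+1)} on divisions of [n]∪{0} for G^Y and G^N, for any players i,j∈[n]: (add-1) RM⁺_i(G^Y)·RM⁺_j(G) = RM⁺_i(G)·RM⁺_j(G^Y), and (add-2) RM⁻_i(G^N)·RM⁻_j(G) = RM⁻_i(G)·RM⁻_j(G^N); i.e. the relative measures of YES-voting power are unaffected by an added YES-blocker, and the relative measures of NO-voting power are unaffected by an added NO-blocker. -/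

import Mathlib

open Finset

variable {α : Type*} [Fintype α] [DecidableEq α]

/-- A simple voting game on the player set `α`: a monotone collection of winning
coalitions in which the empty coalition loses and the full coalition wins. -/
def SimpleVotingGame (W : Finset (Finset α)) : Prop :=
  (∀ S T : Finset α, S ∈ W → S ⊆ T → T ∈ W) ∧ (∅ : Finset α) ∉ W ∧ (univ : Finset α) ∈ W

/-- Player `i` is YES-decisive in the division `S`. -/
def YesDecisive (W : Finset (Finset α)) (i : α) (S : Finset α) : Prop :=
  i ∈ S ∧ S ∈ W ∧ S.erase i ∉ W

/-- Player `i` is NO-decisive in the division `S`. -/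
def NoDecisive (W : Finset (Finset α)) (i : α) (S : Finset α) : Prop :=
  i ∉ S ∧ S ∉ W ∧ insert i S ∈ W

/-- The loyal children of a winning division `S`: the winning divisions `S \ {k}`, `k ∈ S`. -/
def LCwin (W : Finset (Finset α)) (S : Finset α) : Finset (Finset α) :=
  (S.image fun k => S.erase k).filter (· ∈ W)

/-- The loyal children of a losing division `S`: the losing divisions `S ∪ {k}`, `k ∉ S`. -/
def LCloss (W : Finset (Finset α)) (S : Finset α) : Finset (Finset α) :=
  (Sᶜ.image fun k => insert k S).filter (· ∉ W)

/-- The YES-efficacy score `α⁺_i(S)`: `1` if `i` is YES-decisive in `S`, `0` if `S` is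
losing or `i ∉ S`, and otherwise the arithmetic mean of `α⁺_i` over the loyal children. -/
noncomputable def alphaPlus (W : Finset (Finset α)) (i : α) (S : Finset α) : ℝ :=
  if i ∈ S ∧ S ∈ W ∧ S.erase i ∉ W then 1
  else if S ∉ W ∨ i ∉ S then 0
  else (∑ T ∈ (LCwin W S).attach, alphaPlus W i T.1) / (LCwin W S).card
termination_by S.card
decreasing_by
  obtain ⟨T, hT⟩ := T
  simp only [LCwin, Finset.mem_filter, Finset.mem_image] at hT
  obtain ⟨⟨k, hk, rfl⟩, -⟩ := hT
  simpa using Finset.card_erase_lt_of_mem hk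

/-- The NO-efficacy score `α⁻_i(S)`: `1` if `i` is NO-decisive in `S`, `0` if `S` is
winning or `i ∈ S`, and otherwise the arithmetic mean of `α⁻_i` over the loyal children. -/
noncomputable def alphaMinus (W : Finset (Finset α)) (i : α) (S : Finset α) : ℝ :=
  if i ∉ S ∧ S ∉ W ∧ insert i S ∈ W then 1
  else if S ∈ W ∨ i ∈ S then 0
  else (∑ T ∈ (LCloss W S).attach, alphaMinus W i T.1) / (LCloss W S).card
termination_by Sᶜ.card
decreasing_by
  obtain ⟨T, hT⟩ := T
  simp only [LCloss, Finset.mem_filter, Finset.mem_image] at hT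
  obtain ⟨⟨k, hk, rfl⟩, -⟩ := hT
  rw [Finset.compl_insert]
  exact Finset.card_erase_lt_of_mem hk

/-- The efficacy score `α_i(S) = α⁺_i(S) + α⁻_i(S)`. -/
noncomputable def alphaScore (W : Finset (Finset α)) (i : α) (S : Finset α) : ℝ :=
  alphaPlus W i S + alphaMinus W i S

/-- The Recursive Measure of YES-voting power (a priori, equiprobable divisions). -/
noncomputable def RMplus (W : Finset (Finset α)) (i : α) : ℝ :=
  (1 / 2 ^ Fintype.card α) * ∑ S : Finset α, alphaPlus W i S

/-- The Recursive Measure of NO-voting power (a priori, equiprobable divisions). -/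
noncomputable def RMminus (W : Finset (Finset α)) (i : α) : ℝ :=
  (1 / 2 ^ Fintype.card α) * ∑ S : Finset α, alphaMinus W i S

/-- The Recursive Measure of voting power of player `i` (a priori):
`RM_i = 2^{-m} · Σ_S α_i(S)` where `m` is the number of players. -/
noncomputable def RM (W : Finset (Finset α)) (i : α) : ℝ :=
  (1 / 2 ^ Fintype.card α) * ∑ S : Finset α, alphaScore W i S

/-- `d` is a dummy voter: `d` is decisive in no division. -/
def IsDummy (W : Finset (Finset α)) (d : α) : Prop :=
  ∀ S : Finset α, d ∉ S → (insert d S ∈ W ↔ S ∈ W)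

/-- Player `j` weakly dominates player `i`. -/
def WeaklyDominates (W : Finset (Finset α)) (j i : α) : Prop :=
  ∀ S : Finset α, i ∉ S → j ∉ S → insert i S ∈ W → insert j S ∈ W

/-- `What` is the game obtained from `W` by player `j` donating its vote to player `i`. -/
def Donation (W What : Finset (Finset α)) (i j : α) : Prop :=
  ∀ S : Finset α, i ∉ S → j ∉ S →
    (insert i (insert j S) ∈ What ↔ insert i (insert j S) ∈ W) ∧
    (insert i S ∈ What ↔ insert i (insert j S) ∈ W) ∧
    (insert j S ∈ What ↔ S ∈ W) ∧
    (S ∈ What ↔ S ∈ W)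

/-- `What` is obtained from `W` by inducing a (weak, symmetric) quarrel between `i` and `j`. -/
def Quarrel (W What : Finset (Finset α)) (i j : α) : Prop :=
  ∀ S : Finset α, i ∉ S → j ∉ S →
    (insert i (insert j S) ∈ What ↔ (insert i S ∈ W ∨ insert j S ∈ W)) ∧
    (S ∈ What ↔ (insert i S ∈ W ∧ insert j S ∈ W)) ∧
    (insert i S ∈ What ↔ insert i S ∈ W) ∧
    (insert j S ∈ What ↔ insert j S ∈ W)

/-- The voting-independent (product) probability of a division `S`, given the
individual YES-vote probabilities `p`. -/
noncomputable def prodDist (p : α → ℝ) (S : Finset α) : ℝ :=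
  (∏ k ∈ S, p k) * ∏ k ∈ Sᶜ, (1 - p k)

/-- The generalized Recursive Measure of YES-voting power under a
voting-independent probability distribution with vote probabilities `p`. -/
noncomputable def RMplusP (W : Finset (Finset α)) (p : α → ℝ) (i : α) : ℝ :=
  ∑ S : Finset α, alphaPlus W i S * prodDist p S

/-- The generalized Recursive Measure of NO-voting power under a
voting-independent probability distribution with vote probabilities `p`. -/
noncomputable def RMminusP (W : Finset (Finset α)) (p : α → ℝ) (i : α) : ℝ :=
  ∑ S : Finset α, alphaMinus W i S * prodDist p S


/-!
The added player is `none`. In `G^Y` a division without it is losing, so `α⁺` vanishes there,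
while `T ↦ insertNone T` identifies `W` with the winning divisions of `G^Y`. Dropping the
blocker makes a division lose, so the blocker never leaves loyally: the identification respects
loyal children and `α⁺_i (insertNone T) = α⁺_i T`. The total YES-score of each player is thus
unchanged while the number of divisions doubles, so `RM⁺_i(G^Y) = RM⁺_i(G) / 2`. Dually, every
division of `G^N` containing the blocker wins, `T ↦ T.image some` respects losing divisions and
their loyal children, and `RM⁻_i(G^N) = RM⁻_i(G) / 2`.
-/

section Recursion

variable {β : Type*} [DecidableEq β] {W : Finset (Finset β)} {S U : Finset β} {i : β}

theorem mem_LCwin : U ∈ LCwin W S ↔ U ∈ W ∧ ∃ k ∈ S, S.erase k = U := by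
  simp [LCwin, and_comm]

theorem ssubset_of_mem_LCwin (h : U ∈ LCwin W S) : U ⊂ S := by
  obtain ⟨-, k, hk, rfl⟩ := mem_LCwin.1 h
  exact erase_ssubset hk

theorem mem_LCloss [Fintype β] : U ∈ LCloss W S ↔ U ∉ W ∧ ∃ k ∉ S, insert k S = U := by
  simp [LCloss, and_comm]

theorem ssubset_of_mem_LCloss [Fintype β] (h : U ∈ LCloss W S) : S ⊂ U := by
  obtain ⟨-, k, hk, rfl⟩ := mem_LCloss.1 h
  exact ssubset_insert hk

theorem alphaPlus_of_yesDecisive (h : YesDecisive W i S) : alphaPlus W i S = 1 := by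
  rw [alphaPlus]
  exact if_pos h

theorem alphaPlus_of_losing (hS : S ∉ W) : alphaPlus W i S = 0 := by
  rw [alphaPlus, if_neg fun h => hS h.2.1, if_pos (Or.inl hS)]

theorem alphaPlus_of_notMem (hi : i ∉ S) : alphaPlus W i S = 0 := by
  rw [alphaPlus, if_neg fun h => hi h.1, if_pos (Or.inr hi)]

theorem alphaPlus_eq_average (hS : S ∈ W) (hi : i ∈ S) (hd : S.erase i ∈ W) :
    alphaPlus W i S = (∑ T ∈ LCwin W S, alphaPlus W i T) / #(LCwin W S) := by
  rw [alphaPlus, if_neg fun h => h.2.2 hd, if_neg (by tauto), sum_attach _ (alphaPlus W i)]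

theorem alphaMinus_of_noDecisive [Fintype β] (h : NoDecisive W i S) : alphaMinus W i S = 1 := by
  rw [alphaMinus]
  exact if_pos h

theorem alphaMinus_of_winning [Fintype β] (hS : S ∈ W) : alphaMinus W i S = 0 := by
  rw [alphaMinus, if_neg fun h => h.2.1 hS, if_pos (Or.inl hS)]

theorem alphaMinus_of_mem [Fintype β] (hi : i ∈ S) : alphaMinus W i S = 0 := by
  rw [alphaMinus, if_neg fun h => h.1 hi, if_pos (Or.inr hi)]

theorem alphaMinus_eq_average [Fintype β] (hS : S ∉ W) (hi : i ∉ S) (hd : insert i S ∉ W) :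
    alphaMinus W i S = (∑ T ∈ LCloss W S, alphaMinus W i T) / #(LCloss W S) := by
  rw [alphaMinus, if_neg fun h => hd h.2.2, if_neg (by tauto), sum_attach _ (alphaMinus W i)]

end Recursion

section Blockers

variable {β : Type*} [DecidableEq β]

def addYesBlocker (W : Finset (Finset β)) : Finset (Finset (Option β)) :=
  W.image fun S => insert none (S.image some)

def addNoBlocker [Fintype β] (W : Finset (Finset β)) : Finset (Finset (Option β)) :=
  (univ : Finset (Finset β)).image (fun S => insert none (S.image some)) ∪
    W.image (fun S => S.image some)

theorem insert_none_image_some (T : Finset β) : insert none (T.image some) = insertNone T := by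
  ext (_ | _) <;> simp

theorem insertNone_erase_some (T : Finset β) (k : β) :
    (insertNone T).erase (some k) = insertNone (T.erase k) := by
  ext (_ | _) <;> simp

theorem image_some_injective : Function.Injective (image (some : β → Option β)) :=
  image_injective (Option.some_injective β)

theorem insertNone_eraseNone_of_mem {S : Finset (Option β)} (h : none ∈ S) :
    insertNone (eraseNone S) = S := by
  rw [insertNone_eraseNone, insert_eq_of_mem h]

theorem image_some_eraseNone_of_notMem {S : Finset (Option β)} (h : none ∉ S) :
    (eraseNone S).image some = S := by
  rw [image_some_eraseNone, erase_eq_of_notMem h]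

variable {W : Finset (Finset β)}

theorem mem_addYesBlocker {S : Finset (Option β)} :
    S ∈ addYesBlocker W ↔ none ∈ S ∧ eraseNone S ∈ W := by
  simp only [addYesBlocker, insert_none_image_some, mem_image]
  constructor
  · rintro ⟨T, hT, rfl⟩
    simpa
  · rintro ⟨h, hS⟩
    exact ⟨eraseNone S, hS, insertNone_eraseNone_of_mem h⟩

theorem insertNone_mem_addYesBlocker {T : Finset β} : insertNone T ∈ addYesBlocker W ↔ T ∈ W := by
  simp [mem_addYesBlocker]

theorem mem_addNoBlocker [Fintype β] {S : Finset (Option β)} :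
    S ∈ addNoBlocker W ↔ none ∈ S ∨ eraseNone S ∈ W := by
  simp only [addNoBlocker, insert_none_image_some, mem_union, mem_image, mem_univ, true_and]
  constructor
  · rintro (⟨T, rfl⟩ | ⟨T, hT, rfl⟩)
    · simp
    · simpa
  · intro h
    by_cases hn : none ∈ S
    · exact Or.inl ⟨eraseNone S, insertNone_eraseNone_of_mem hn⟩
    · exact Or.inr ⟨eraseNone S, h.resolve_left hn, image_some_eraseNone_of_notMem hn⟩

theorem image_some_mem_addNoBlocker [Fintype β] {T : Finset β} :
    T.image some ∈ addNoBlocker W ↔ T ∈ W := by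
  simp [mem_addNoBlocker]

theorem LCwin_addYesBlocker (T : Finset β) :
    LCwin (addYesBlocker W) (insertNone T) = (LCwin W T).image insertNone := by
  ext U
  simp only [mem_image, mem_LCwin]
  constructor
  · rintro ⟨hU, (_ | k), hk, rfl⟩
    · simp [mem_addYesBlocker] at hU
    · rw [insertNone_erase_some, insertNone_mem_addYesBlocker] at hU
      exact ⟨T.erase k, ⟨hU, k, by simpa using hk, rfl⟩, (insertNone_erase_some T k).symm⟩
  · rintro ⟨_, ⟨hU, k, hk, rfl⟩, rfl⟩
    exact ⟨insertNone_mem_addYesBlocker.2 hU, some k, by simpa, insertNone_erase_some T k⟩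

theorem LCloss_addNoBlocker [Fintype β] (T : Finset β) :
    LCloss (addNoBlocker W) (T.image some) = (LCloss W T).image (image some) := by
  ext U
  simp only [mem_image, mem_LCloss]
  constructor
  · rintro ⟨hU, (_ | k), hk, rfl⟩
    · simp [mem_addNoBlocker] at hU
    · rw [← image_insert, image_some_mem_addNoBlocker] at hU
      exact ⟨insert k T, ⟨hU, k, by simpa using hk, rfl⟩, image_insert _ _ _⟩
  · rintro ⟨_, ⟨hU, k, hk, rfl⟩, rfl⟩
    exact ⟨mt image_some_mem_addNoBlocker.1 hU, some k, by simpa, (image_insert _ _ _).symm⟩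

variable (W) (i : β)

theorem alphaPlus_addYesBlocker_insertNone (T : Finset β) :
    alphaPlus (addYesBlocker W) (some i) (insertNone T) = alphaPlus W i T := by
  induction T using strongInduction with
  | H T ih =>
  by_cases hT : T ∈ W; swap
  · rw [alphaPlus_of_losing hT, alphaPlus_of_losing (mt insertNone_mem_addYesBlocker.1 hT)]
  by_cases hi : i ∈ T; swap
  · rw [alphaPlus_of_notMem hi, alphaPlus_of_notMem (mt some_mem_insertNone.1 hi)]
  have hT' := insertNone_mem_addYesBlocker.2 hT
  have hi' := some_mem_insertNone.2 hi
  by_cases hd : T.erase i ∈ W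
  · have hd' : (insertNone T).erase (some i) ∈ addYesBlocker W := by
      rwa [insertNone_erase_some, insertNone_mem_addYesBlocker]
    rw [alphaPlus_eq_average hT hi hd, alphaPlus_eq_average hT' hi' hd', LCwin_addYesBlocker,
      card_image_of_injective _ insertNone.injective,
      sum_image fun _ _ _ _ h => insertNone.injective h]
    congr 1
    exact sum_congr rfl fun U hU => ih U (ssubset_of_mem_LCwin hU)
  · have hd' : (insertNone T).erase (some i) ∉ addYesBlocker W := by
      rwa [insertNone_erase_some, insertNone_mem_addYesBlocker]
    rw [alphaPlus_of_yesDecisive ⟨hi, hT, hd⟩, alphaPlus_of_yesDecisive ⟨hi', hT', hd'⟩]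

theorem alphaMinus_addNoBlocker_image_some [Fintype β] (T : Finset β) :
    alphaMinus (addNoBlocker W) (some i) (T.image some) = alphaMinus W i T := by
  by_cases hT : T ∈ W
  · rw [alphaMinus_of_winning hT, alphaMinus_of_winning (image_some_mem_addNoBlocker.2 hT)]
  by_cases hi : i ∈ T
  · rw [alphaMinus_of_mem hi, alphaMinus_of_mem (mem_image_of_mem some hi)]
  have hT' := mt image_some_mem_addNoBlocker.1 hT
  have hi' : some i ∉ T.image some := by simpa
  by_cases hd : insert i T ∈ W
  · have hd' : insert (some i) (T.image some) ∈ addNoBlocker W := by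
      rwa [← image_insert, image_some_mem_addNoBlocker]
    rw [alphaMinus_of_noDecisive ⟨hi, hT, hd⟩, alphaMinus_of_noDecisive ⟨hi', hT', hd'⟩]
  · have hd' : insert (some i) (T.image some) ∉ addNoBlocker W := by
      rwa [← image_insert, image_some_mem_addNoBlocker]
    rw [alphaMinus_eq_average hT hi hd, alphaMinus_eq_average hT' hi' hd', LCloss_addNoBlocker,
      card_image_of_injective _ image_some_injective,
      sum_image fun _ _ _ _ h => image_some_injective h]
    congr 1
    refine sum_congr rfl fun U hU => ?_
    have _ : #Uᶜ < #Tᶜ := card_lt_card (compl_ssubset_compl.2 (ssubset_of_mem_LCloss hU))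
    exact alphaMinus_addNoBlocker_image_some U
termination_by #Tᶜ

variable [Fintype β]

theorem sum_alphaPlus_addYesBlocker :
    ∑ S, alphaPlus (addYesBlocker W) (some i) S = ∑ T, alphaPlus W i T := by
  refine (Fintype.sum_of_injective insertNone insertNone.injective _ _ (fun S hS => ?_)
    fun T => (alphaPlus_addYesBlocker_insertNone W i T).symm).symm
  exact alphaPlus_of_losing fun h =>
    hS ⟨eraseNone S, insertNone_eraseNone_of_mem (mem_addYesBlocker.1 h).1⟩

theorem sum_alphaMinus_addNoBlocker :
    ∑ S, alphaMinus (addNoBlocker W) (some i) S = ∑ T, alphaMinus W i T := by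
  refine (Fintype.sum_of_injective _ image_some_injective _ _ (fun S hS => ?_)
    fun T => (alphaMinus_addNoBlocker_image_some W i T).symm).symm
  exact alphaMinus_of_winning (mem_addNoBlocker.2 (Or.inl (by_contra fun h =>
    hS ⟨eraseNone S, image_some_eraseNone_of_notMem h⟩)))

theorem RMplus_addYesBlocker : RMplus (addYesBlocker W) (some i) = RMplus W i / 2 := by
  rw [RMplus, RMplus, sum_alphaPlus_addYesBlocker, Fintype.card_option, pow_succ]
  ring

theorem RMminus_addNoBlocker : RMminus (addNoBlocker W) (some i) = RMminus W i / 2 := by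
  rw [RMminus, RMminus, sum_alphaMinus_addNoBlocker, Fintype.card_option, pow_succ]
  ring

end Blockers

theorem rm_added_blocker_general {n : ℕ} (W : Finset (Finset (Fin n)))
    (WY : Finset (Finset (Option (Fin n))))
    (hWY : WY = W.image (fun S => insert none (S.image some)))
    (WN : Finset (Finset (Option (Fin n))))
    (hWN : WN = (univ : Finset (Finset (Fin n))).image (fun S => insert none (S.image some)) ∪
      W.image (fun S => S.image some)) :
    (∀ i j : Fin n,
      RMplus WY (some i) * RMplus W j = RMplus W i * RMplus WY (some j)) ∧
    (∀ i j : Fin n,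
      RMminus WN (some i) * RMminus W j = RMminus W i * RMminus WN (some j)) := by
  obtain rfl : WY = addYesBlocker W := hWY
  obtain rfl : WN = addNoBlocker W := hWN
  refine ⟨fun i j => ?_, fun i j => ?_⟩
  · rw [RMplus_addYesBlocker, RMplus_addYesBlocker]
    ring
  · rw [RMminus_addNoBlocker, RMminus_addNoBlocker]
    ring

/-- RM satisfies the added blocker postulate (add-1) and (add-2)
under equiprobable divisions. -/
theorem rm_added_blocker {n : ℕ} (W : Finset (Finset (Fin n)))
    (hW : SimpleVotingGame W)
    (WY : Finset (Finset (Option (Fin n))))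
    (hWY : WY = W.image (fun S => insert none (S.image some)))
    (WN : Finset (Finset (Option (Fin n))))
    (hWN : WN = (univ : Finset (Finset (Fin n))).image (fun S => insert none (S.image some)) ∪
      W.image (fun S => S.image some)) :
    (∀ i j : Fin n,
      RMplus WY (some i) * RMplus W j = RMplus W i * RMplus WY (some j)) ∧
    (∀ i j : Fin n,
      RMminus WN (some i) * RMminus W j = RMminus W i * RMminus WN (some j)) :=
  rm_added_blocker_general W WY hWY WN hWN
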